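/- arXiv:2106.07634 — 3 statements merged into one kernel-verified Lean document; each statement's English description precedes it below -/
import Mathlib

section
/- For any matrix A ∈ ℂ^{N×N} with singular value decomposition A = WΣV† (Σ invertible), the polar factor U = WV† minimizes ‖X − A‖_F over all unitary matrices X, i.e., for every unitary X, ‖WV† − A‖_F ≤ ‖X − A‖_F. -/
/-!
The Frobenius norm is invariant under multiplication by unitaries on either side, so
`‖X - A‖_F = ‖Y - Σ‖_F` with `Y = Wᴴ X V` unitary, while `‖W Vᴴ - A‖_F = ‖1 - Σ‖_F`.
Expanding the square, `‖Y - Σ‖_F² = N - 2 ∑ σᵢ Re Yᵢᵢ + ∑ σᵢ²`, and since the entries of a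
unitary matrix have modulus at most `1`, this is smallest for `Y = 1`.
-/

open Matrix

noncomputable def frobNorm {m n : Type*} [Fintype m] [Fintype n] (A : Matrix m n ℂ) : ℝ :=
  Real.sqrt (∑ i, ∑ j, ‖A i j‖ ^ 2)

section FrobNorm

variable {m n : Type*} [Fintype m] [Fintype n]

lemma frobNorm_nonneg (A : Matrix m n ℂ) : 0 ≤ frobNorm A :=
  Real.sqrt_nonneg _

lemma frobNorm_sq (A : Matrix m n ℂ) : frobNorm A ^ 2 = ∑ i, ∑ j, ‖A i j‖ ^ 2 :=
  Real.sq_sqrt (by positivity)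

lemma ofReal_frobNorm_sq (A : Matrix m n ℂ) : ((frobNorm A ^ 2 : ℝ) : ℂ) = trace (Aᴴ * A) := by
  simp only [frobNorm_sq, trace, diag, mul_apply, conjTranspose_apply]
  push_cast
  rw [Finset.sum_comm]
  refine Finset.sum_congr rfl fun i _ => Finset.sum_congr rfl fun j _ => ?_
  rw [Complex.star_def, Complex.conj_mul']

lemma frobNorm_conjTranspose (A : Matrix m n ℂ) : frobNorm Aᴴ = frobNorm A := by
  simp only [frobNorm, conjTranspose_apply, norm_star]
  rw [Finset.sum_comm]

lemma frobNorm_unitary_mul [DecidableEq m] {U : Matrix m m ℂ} (hU : U ∈ unitaryGroup m ℂ)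
    (A : Matrix m n ℂ) :
    frobNorm (U * A) = frobNorm A := by
  refine (sq_eq_sq₀ (frobNorm_nonneg _) (frobNorm_nonneg _)).1 (Complex.ofReal_injective ?_)
  rw [ofReal_frobNorm_sq, ofReal_frobNorm_sq, conjTranspose_mul, Matrix.mul_assoc,
    ← Matrix.mul_assoc Uᴴ, ← star_eq_conjTranspose, Unitary.star_mul_self_of_mem hU,
    Matrix.one_mul]

lemma frobNorm_mul_unitary [DecidableEq n] {U : Matrix n n ℂ} (hU : U ∈ unitaryGroup n ℂ)
    (A : Matrix m n ℂ) :
    frobNorm (A * U) = frobNorm A := by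
  have hUstar : Uᴴ ∈ unitaryGroup n ℂ := Unitary.star_mem hU
  rw [← frobNorm_conjTranspose, conjTranspose_mul, frobNorm_unitary_mul hUstar,
    frobNorm_conjTranspose]

lemma frobNorm_sq_of_mem_unitaryGroup [DecidableEq n] {U : Matrix n n ℂ}
    (hU : U ∈ unitaryGroup n ℂ) :
    frobNorm U ^ 2 = Fintype.card n := by
  apply Complex.ofReal_injective
  rw [ofReal_frobNorm_sq, ← star_eq_conjTranspose, Unitary.star_mul_self_of_mem hU, trace_one]
  push_cast
  rfl

lemma frobNorm_sq_sub_diagonal [DecidableEq n] (Y : Matrix n n ℂ) (σ : n → ℝ) :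
    frobNorm (Y - diagonal fun i => (σ i : ℂ)) ^ 2 =
      frobNorm Y ^ 2 - 2 * ∑ i, σ i * (Y i i).re + ∑ i, σ i ^ 2 := by
  have entry (i j : n) : ‖(Y - diagonal fun i => (σ i : ℂ)) i j‖ ^ 2 =
      ‖Y i j‖ ^ 2 + if i = j then σ i ^ 2 - 2 * (σ i * (Y i i).re) else 0 := by
    rcases eq_or_ne i j with rfl | hij
    · simp only [Matrix.sub_apply, diagonal_apply_eq, Complex.sq_norm, Complex.normSq_sub,
        Complex.normSq_ofReal, Complex.conj_ofReal, Complex.re_mul_ofReal, if_true]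
      ring
    · simp [hij]
  simp only [frobNorm_sq, entry, Finset.sum_add_distrib, Finset.sum_ite_eq, Finset.mem_univ,
    if_true, Finset.sum_sub_distrib, Finset.mul_sum]
  ring

lemma frobNorm_one_sub_diagonal_le [DecidableEq n] {Y : Matrix n n ℂ}
    (hY : Y ∈ unitaryGroup n ℂ) {σ : n → ℝ} (hσ : ∀ i, 0 ≤ σ i) :
    frobNorm (1 - diagonal fun i => (σ i : ℂ)) ≤ frobNorm (Y - diagonal fun i => (σ i : ℂ)) := by
  refine (pow_le_pow_iff_left₀ (frobNorm_nonneg _) (frobNorm_nonneg _) two_ne_zero).1 ?_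
  rw [frobNorm_sq_sub_diagonal, frobNorm_sq_sub_diagonal,
    frobNorm_sq_of_mem_unitaryGroup hY, frobNorm_sq_of_mem_unitaryGroup (one_mem _)]
  have hdiag (i : n) : (Y i i).re ≤ 1 :=
    (Complex.re_le_norm _).trans (entry_norm_bound_of_unitary hY i i)
  simp only [one_apply_eq, Complex.one_re, mul_one]
  gcongr with i
  exact mul_le_of_le_one_right (hσ i) (hdiag i)

end FrobNorm

/-- For `A = W Σ Vᴴ` a full SVD with `W, V` unitary and `Σ` positive diagonal, the polar
factor `U = W Vᴴ` minimizes `‖X − A‖_F` over all unitary matrices `X`. -/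
theorem stmt_3 (N : ℕ) (A W V : Matrix (Fin N) (Fin N) ℂ)
    (σ : Fin N → ℝ) (hσ : ∀ i, 0 < σ i)
    (hW : W ∈ Matrix.unitaryGroup (Fin N) ℂ) (hV : V ∈ Matrix.unitaryGroup (Fin N) ℂ)
    (hA : A = W * Matrix.diagonal (fun i => (σ i : ℂ)) * Vᴴ) :
    ∀ X ∈ Matrix.unitaryGroup (Fin N) ℂ, frobNorm (W * Vᴴ - A) ≤ frobNorm (X - A) := by
  intro X hX
  set D := diagonal fun i => (σ i : ℂ)
  have hWstar : Wᴴ ∈ unitaryGroup (Fin N) ℂ := Unitary.star_mem hW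
  have hVstar : Vᴴ ∈ unitaryGroup (Fin N) ℂ := Unitary.star_mem hV
  have frobNorm_conj (B : Matrix (Fin N) (Fin N) ℂ) : frobNorm (W * B * Vᴴ) = frobNorm B := by
    rw [frobNorm_mul_unitary hVstar, frobNorm_unitary_mul hW]
  have hX_eq : X = W * (Wᴴ * X * V) * Vᴴ := by
    simp only [← Matrix.mul_assoc, ← star_eq_conjTranspose, Unitary.mul_star_self_of_mem hW]
    rw [Matrix.mul_assoc, Unitary.mul_star_self_of_mem hV, Matrix.one_mul, Matrix.mul_one]
  calc frobNorm (W * Vᴴ - A) = frobNorm (W * (1 - D) * Vᴴ) := by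
        rw [hA, Matrix.mul_sub, Matrix.sub_mul, Matrix.mul_one]
    _ = frobNorm (1 - D) := frobNorm_conj _
    _ ≤ frobNorm (Wᴴ * X * V - D) :=
        frobNorm_one_sub_diagonal_le (mul_mem (mul_mem hWstar hX) hV) fun i => (hσ i).le
    _ = frobNorm (W * (Wᴴ * X * V - D) * Vᴴ) := (frobNorm_conj _).symm
    _ = frobNorm (X - A) := by
        rw [hA, Matrix.mul_sub, Matrix.sub_mul, ← hX_eq]
end

section
/- Let G₁, G₂ be unitaries on ℂ^r ⊗ ℂ^{2^n} satisfying G₁|0⟩|0⟩ = Σ_k √p_k |k⟩|ψ_k⟩ and G₂|0⟩|0⟩ = Σ_k √s_k |k⟩|φ_k⟩ for probability vectors p, s and unit vectors |ψ_k⟩, |φ_k⟩. Then for all standard basis vectors |i⟩, |j⟩ in ℂ^{2^n}: ⟨0|⟨0|⟨i| (G₂†⊗I)(I⊗SWAP)(G₁⊗I) |0⟩|0⟩|j⟩ = Σ_k √(p_k s_k) ⟨i|ψ_k⟩⟨φ_k|j⟩, i.e., the unitary (G₂†⊗I)(I⊗SWAP)(G₁⊗I) is a (1,0)-block-encoding of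 Σ_k √(p_k s_k)|ψ_k⟩⟨φ_k|. -/
open Matrix Kronecker

/-- Block-encoding a weighted sum of projectors from quantum samples:
the unitary `(G₂† ⊗ I)(I ⊗ SWAP)(G₁ ⊗ I)` is a `(1,0)`-block-encoding of
`Σ_k √(p_k s_k) |ψ_k⟩⟨φ_k|`. -/
theorem stmt_9 (r n : ℕ) [NeZero r]
    (G₁ G₂ : Matrix (Fin r × Fin (2 ^ n)) (Fin r × Fin (2 ^ n)) ℂ)
    (hG₁U : G₁ ∈ Matrix.unitaryGroup (Fin r × Fin (2 ^ n)) ℂ)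
    (hG₂U : G₂ ∈ Matrix.unitaryGroup (Fin r × Fin (2 ^ n)) ℂ)
    (p s : Fin r → ℝ) (hp : ∀ k, 0 ≤ p k) (hs : ∀ k, 0 ≤ s k)
    (hpsum : ∑ k, p k = 1) (hssum : ∑ k, s k = 1)
    (ψ φ : Fin r → (Fin (2 ^ n) → ℂ))
    (hψ : ∀ k, ∑ m, ‖ψ k m‖ ^ 2 = 1) (hφ : ∀ k, ∑ m, ‖φ k m‖ ^ 2 = 1)
    (hG₁ : ∀ k m, G₁ (k, m) ((0 : Fin r), (0 : Fin (2 ^ n))) = (Real.sqrt (p k) : ℂ) * ψ k m)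
    (hG₂ : ∀ k m, G₂ (k, m) ((0 : Fin r), (0 : Fin (2 ^ n))) = (Real.sqrt (s k) : ℂ) * φ k m)
    (Sw : Matrix ((Fin r × Fin (2 ^ n)) × Fin (2 ^ n)) ((Fin r × Fin (2 ^ n)) × Fin (2 ^ n)) ℂ)
    (hSw : ∀ q q', Sw q q' =
      if q.1.1 = q'.1.1 ∧ q.1.2 = q'.2 ∧ q.2 = q'.1.2 then 1 else 0) :
    ∀ i j : Fin (2 ^ n),
      ((G₂ ⊗ₖ (1 : Matrix (Fin (2 ^ n)) (Fin (2 ^ n)) ℂ))ᴴ * Sw *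
          (G₁ ⊗ₖ (1 : Matrix (Fin (2 ^ n)) (Fin (2 ^ n)) ℂ)))
        (((0 : Fin r), (0 : Fin (2 ^ n))), i) (((0 : Fin r), (0 : Fin (2 ^ n))), j) =
        ∑ k, (Real.sqrt (p k * s k) : ℂ) * ψ k i * star (φ k j) := by
  intro i j
  simp only [Matrix.mul_apply, Matrix.conjTranspose_apply, Matrix.kroneckerMap_apply,
    Matrix.one_apply, hSw, Fintype.sum_prod_type, hG₁, hG₂]
  simp [Finset.mul_sum, Finset.sum_mul, mul_ite, ite_mul, Finset.sum_ite_eq,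
    Finset.sum_ite_eq', mul_comm, mul_assoc, mul_left_comm, Real.sqrt_mul (hp _),
    Complex.ofReal_mul, ite_and, apply_ite (starRingEnd ℂ)]
end

section
/- Let U_ψ, U_φ be unitaries on ℂ^r ⊗ ℂ^{2^n} with U_ψ|i⟩|0⟩ = |i⟩|ψ_i⟩ and U_φ|i⟩|0⟩ = |i⟩|φ_i⟩, let W = I − 2·I_r⊗|0⟩⟨0|_n, and let H^{⊗g} denote the Hadamard transform on ℂ^r (r = 2^g). Define V₀ = (H^{⊗g}⊗I)U_φU_ψ†(H^{⊗g}⊗I) and V₁ = (H^{⊗g}⊗I)U_φWU_ψ†(H^{⊗g}⊗I). Then (⟨0|_g⊗I_n)·½(V₀−V₁)·(|0⟩_g⊗I_n) = (1/r)Σ_{k∈[r]} |φ_k⟩⟨ψ_k|. -/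
open Matrix Kronecker

/-- Bitwise inner product of the binary expansions of `a` and `b`, over `g` bits. -/
def bitdot (g a b : ℕ) : ℕ :=
  ∑ i ∈ Finset.range g, if Nat.testBit a i ∧ Nat.testBit b i then 1 else 0

/-- The `g`-fold tensor power of the Hadamard gate, `H^{⊗g}`. -/
noncomputable def hadamardPow (g : ℕ) : Matrix (Fin (2 ^ g)) (Fin (2 ^ g)) ℂ :=
  Matrix.of fun a b => ((Real.sqrt (2 ^ g) : ℂ))⁻¹ * (-1) ^ bitdot g (a : ℕ) (b : ℕ)

/-- Block-encoding from state preparation unitaries: with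
`V₀ = (H^{⊗g}⊗I) U_φ U_ψ† (H^{⊗g}⊗I)` and `V₁ = (H^{⊗g}⊗I) U_φ W U_ψ† (H^{⊗g}⊗I)`
(`W = I − 2·I⊗|0⟩⟨0|`), the top-left block of `½(V₀ − V₁)` is
`(1/r) Σ_k |φ_k⟩⟨ψ_k|`, `r = 2^g`. -/
theorem stmt_10 (g n : ℕ)
    (Uψ Uφ : Matrix (Fin (2 ^ g) × Fin (2 ^ n)) (Fin (2 ^ g) × Fin (2 ^ n)) ℂ)
    (hUψU : Uψ ∈ Matrix.unitaryGroup (Fin (2 ^ g) × Fin (2 ^ n)) ℂ)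
    (hUφU : Uφ ∈ Matrix.unitaryGroup (Fin (2 ^ g) × Fin (2 ^ n)) ℂ)
    (ψ φ : Fin (2 ^ g) → (Fin (2 ^ n) → ℂ))
    (hψ : ∀ k, ∑ m, ‖ψ k m‖ ^ 2 = 1) (hφ : ∀ k, ∑ m, ‖φ k m‖ ^ 2 = 1)
    (hUψ : ∀ (i : Fin (2 ^ g)) (q : Fin (2 ^ g) × Fin (2 ^ n)),
      Uψ q (i, (0 : Fin (2 ^ n))) = if q.1 = i then ψ i q.2 else 0)
    (hUφ : ∀ (i : Fin (2 ^ g)) (q : Fin (2 ^ g) × Fin (2 ^ n)),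
      Uφ q (i, (0 : Fin (2 ^ n))) = if q.1 = i then φ i q.2 else 0)
    (Wm : Matrix (Fin (2 ^ g) × Fin (2 ^ n)) (Fin (2 ^ g) × Fin (2 ^ n)) ℂ)
    (hWm : Wm = 1 - (2 : ℂ) • Matrix.of (fun q q' =>
      if q.1 = q'.1 ∧ q.2 = (0 : Fin (2 ^ n)) ∧ q'.2 = (0 : Fin (2 ^ n)) then 1 else 0)) :
    letI HgI := hadamardPow g ⊗ₖ (1 : Matrix (Fin (2 ^ n)) (Fin (2 ^ n)) ℂ)
    letI V₀ := HgI * (Uφ * Uψᴴ) * HgI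
    letI V₁ := HgI * (Uφ * Wm * Uψᴴ) * HgI
    ∀ i j : Fin (2 ^ n),
      ((1 / 2 : ℂ) • (V₀ - V₁)) ((0 : Fin (2 ^ g)), i) ((0 : Fin (2 ^ g)), j) =
        (1 / (2 ^ g : ℂ)) * ∑ k, φ k i * star (ψ k j) := by
  intro i j
  classical
  set HgI := hadamardPow g ⊗ₖ (1 : Matrix (Fin (2 ^ n)) (Fin (2 ^ n)) ℂ) with hHgI
  set V₀ := HgI * (Uφ * Uψᴴ) * HgI with hV₀
  set V₁ := HgI * (Uφ * Wm * Uψᴴ) * HgI with hV₁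
  set P : Matrix (Fin (2 ^ g) × Fin (2 ^ n)) (Fin (2 ^ g) × Fin (2 ^ n)) ℂ :=
    Matrix.of (fun q q' =>
      if q.1 = q'.1 ∧ q.2 = (0 : Fin (2 ^ n)) ∧ q'.2 = (0 : Fin (2 ^ n)) then 1 else 0) with hP
  have key : (1 / 2 : ℂ) • (V₀ - V₁) = HgI * (Uφ * P * Uψᴴ) * HgI := by
    have h2 : Uφ * Uψᴴ - Uφ * Wm * Uψᴴ = (2 : ℂ) • (Uφ * P * Uψᴴ) := by
      have hW : Uφ * Wm = Uφ - (2 : ℂ) • (Uφ * P) := by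
        rw [hWm, Matrix.mul_sub, Matrix.mul_smul, Matrix.mul_one]
      rw [hW, Matrix.sub_mul, Matrix.smul_mul]
      abel
    show (1 / 2 : ℂ) • (HgI * (Uφ * Uψᴴ) * HgI - HgI * (Uφ * Wm * Uψᴴ) * HgI) = _
    rw [← Matrix.sub_mul, ← Matrix.mul_sub, h2, Matrix.mul_smul, Matrix.smul_mul,
      smul_smul]
    norm_num
  have hH0 : ∀ b : Fin (2 ^ g), hadamardPow g 0 b = ((Real.sqrt (2 ^ g) : ℂ))⁻¹ := by
    intro b
    simp [hadamardPow, bitdot, Nat.zero_testBit]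
  have hH0' : ∀ b : Fin (2 ^ g), hadamardPow g b 0 = ((Real.sqrt (2 ^ g) : ℂ))⁻¹ := by
    intro b
    simp [hadamardPow, bitdot, Nat.zero_testBit]
  have hUφP : ∀ (q : Fin (2 ^ g) × Fin (2 ^ n)) (k : Fin (2 ^ g)) (l : Fin (2 ^ n)),
      (Uφ * P) q (k, l)
        = if l = 0 then (if q.1 = k then φ k q.2 else 0) else 0 := by
    intro q k l
    rw [Matrix.mul_apply, Fintype.sum_prod_type]
    simp only [hP, Matrix.of_apply, ite_and, mul_ite, mul_one, mul_zero]
    by_cases hl : l = 0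
    · simp [hl, Finset.sum_ite_eq', hUφ]
    · simp [hl]
  have hM : ∀ (a b : Fin (2 ^ g)) (x y : Fin (2 ^ n)),
      (Uφ * P * Uψᴴ) (a, x) (b, y)
        = if a = b then φ a x * star (ψ a y) else 0 := by
    intro a b x y
    rw [Matrix.mul_apply, Fintype.sum_prod_type]
    simp only [hUφP, Matrix.conjTranspose_apply, ite_mul, zero_mul]
    simp only [Finset.sum_ite_eq', Finset.mem_univ, if_true]
    simp [hUψ, Finset.sum_ite_eq', apply_ite (star : ℂ → ℂ)]
    by_cases hab : a = b
    · simp [hab]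
    · simp [hab, Ne.symm hab]
  rw [key]
  have expand : (HgI * (Uφ * P * Uψᴴ) * HgI) ((0 : Fin (2 ^ g)), i) ((0 : Fin (2 ^ g)), j)
      = ∑ q' : Fin (2 ^ g) × Fin (2 ^ n), ∑ q : Fin (2 ^ g) × Fin (2 ^ n),
        HgI ((0 : Fin (2 ^ g)), i) q * (Uφ * P * Uψᴴ) q q' * HgI q' ((0 : Fin (2 ^ g)), j) := by
    rw [Matrix.mul_apply]
    congr 1
    ext q'
    rw [Matrix.mul_apply, Finset.sum_mul]
  rw [expand]
  have hsimp : ∀ q q' : Fin (2 ^ g) × Fin (2 ^ n),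
      HgI ((0 : Fin (2 ^ g)), i) q * (Uφ * P * Uψᴴ) q q' * HgI q' ((0 : Fin (2 ^ g)), j)
        = if i = q.2 then (if q.1 = q'.1 then (if q'.2 = j then
            ((Real.sqrt (2 ^ g) : ℂ))⁻¹ * (φ q.1 q.2 * star (ψ q.1 q'.2))
              * ((Real.sqrt (2 ^ g) : ℂ))⁻¹ else 0) else 0) else 0 := by
    intro q q'
    show (hadamardPow g ⊗ₖ 1) _ q * _ * (hadamardPow g ⊗ₖ 1) q' _ = _
    rw [Matrix.kroneckerMap_apply, Matrix.kroneckerMap_apply, hH0, hH0']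
    rcases q with ⟨a, x⟩
    rcases q' with ⟨b, y⟩
    rw [hM, Matrix.one_apply, Matrix.one_apply]
    split_ifs <;> ring
  simp only [hsimp]
  simp only [Fintype.sum_prod_type]
  simp only [mul_ite, mul_zero, mul_one, ite_mul, zero_mul,
    Finset.sum_ite_eq, Finset.sum_ite_eq', Finset.mem_univ, if_true]
  have hs : ((Real.sqrt (2 ^ g) : ℂ))⁻¹ * ((Real.sqrt (2 ^ g) : ℂ))⁻¹ = (2 ^ g : ℂ)⁻¹ := by
    rw [← mul_inv, ← Complex.ofReal_mul, Real.mul_self_sqrt (by positivity)]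
    norm_num
  rw [Finset.mul_sum]
  apply Finset.sum_congr rfl
  intro k _
  rw [one_div, ← hs]
  ring
end
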